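/- Let K be a subfield of Q̄ and let α ∈ Q̄^×. Then W_K(α) = 0 if and only if α ∈ K^div, i.e., if and only if every conjugate of α over K is a root of unity times α. -/

import Mathlib

noncomputable section

/-- A fixed algebraic closure of `ℚ`. -/
abbrev Qbar : Type := AlgebraicClosure ℚ

/-- The primitive integer minimal polynomial of an algebraic number. -/
noncomputable def intMinpoly (α : Qbar) : Polynomial ℤ :=
  (IsLocalization.integerNormalization (nonZeroDivisors ℤ) (minpoly ℚ α)).primPart

/-- The absolute logarithmic Weil height of an algebraic number, defined via the
(logarithmic) Mahler measure of its primitive integer minimal polynomial. -/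
noncomputable def weilHeight (α : Qbar) : ℝ :=
  ((minpoly ℚ α).natDegree : ℝ)⁻¹ *
    (Real.log |((intMinpoly α).leadingCoeff : ℝ)| +
      (((intMinpoly α).map (Int.castRingHom ℂ)).roots.map
        (fun z => Real.log (max 1 ‖z‖))).sum)

/-- `σ` is an automorphism of `Q̄` fixing `K` pointwise, i.e. `σ ∈ Aut(Q̄/K)`. -/
def fixes (K : Subfield Qbar) (σ : Qbar ≃+* Qbar) : Prop := ∀ x ∈ K, σ x = x

/-- `W_K(α) = max { h(σα/α) : σ ∈ Aut(Q̄/K) }`. -/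
noncomputable def WK (K : Subfield Qbar) (α : Qbar) : ℝ :=
  sSup {r : ℝ | ∃ σ : Qbar ≃+* Qbar, fixes K σ ∧ r = weilHeight (σ α / α)}

/-- `K^div = { γ ∈ Q̄^× : γ^m ∈ K^× for some nonzero integer m }`. -/
def Kdiv (K : Subfield Qbar) : Set Qbar :=
  {γ | γ ≠ 0 ∧ ∃ m : ℤ, m ≠ 0 ∧ γ ^ m ∈ K}

/-! The Weil height of `γ` is `(deg γ)⁻¹ · log M(f)`, where `M(f)` is the Mahler measure of the
primitive integer minimal polynomial `f` of `γ`. Since `M(f) ≥ 1`, the height vanishes iff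
`M(f) = 1`, and by Kronecker's theorem this happens for `γ ≠ 0` iff `γ` is a root of unity (for
the converse, `f ∣ X ^ n - 1`, a product of cyclotomic polynomials of Mahler measure `1`).
Hence `W_K(α) = 0` iff every ratio `σα / α` is a root of unity. The conjugates `σα` are among the
finitely many roots of the minimal polynomial of `α` over `K`, so these ratios have a common
exponent `n`; then `α ^ n` is fixed by `Aut(Q̄/K)` and lies in `K`, as `Q̄ / K` is Galois. -/

open Polynomial

instance : Algebra.IsAlgebraic ℚ Qbar := AlgebraicClosure.isAlgebraic ℚ

lemma Set.Finite.exists_pos_forall_pow_eq_one {M : Type*} [Monoid M] {s : Set M}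
    (hs : s.Finite) (h : ∀ x ∈ s, IsOfFinOrder x) : ∃ n, 0 < n ∧ ∀ x ∈ s, x ^ n = 1 :=
  ⟨∏ x ∈ hs.toFinset, orderOf x,
    Finset.prod_pos fun x hx => (h x (hs.mem_toFinset.mp hx)).orderOf_pos,
    fun _ hx => orderOf_dvd_iff_pow_eq_one.mp (Finset.dvd_prod_of_mem _ (hs.mem_toFinset.mpr hx))⟩

lemma csSup_eq_zero_iff_of_nonneg {s : Set ℝ} (hne : s.Nonempty) (hbdd : BddAbove s)
    (hs : ∀ x ∈ s, 0 ≤ x) : sSup s = 0 ↔ ∀ x ∈ s, x = 0 :=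
  ⟨fun h x hx => le_antisymm (h ▸ le_csSup hbdd hx) (hs x hx),
    fun h => le_antisymm (csSup_le hne fun x hx => (h x hx).le)
      (hne.elim fun x hx => h x hx ▸ le_csSup hbdd hx)⟩

lemma mahlerMeasure_X_pow_sub_one {n : ℕ} (hn : 0 < n) :
    (X ^ n - 1 : ℂ[X]).mahlerMeasure = 1 := by
  rw [← prod_cyclotomic_eq_X_pow_sub_one hn ℂ, Finset.prod_eq_multiset_prod,
    prod_mahlerMeasure_eq_mahlerMeasure_prod, Multiset.map_map]
  refine Multiset.prod_eq_one fun x hx => ?_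
  obtain ⟨d, -, rfl⟩ := Multiset.mem_map.mp hx
  simpa using cyclotomic_mahlerMeasure_eq_one (R := ℂ) d

lemma mahlerMeasure_map_eq_one_of_dvd_X_pow_sub_one {p : ℤ[X]} {n : ℕ} (hn : 0 < n)
    (h : p ∣ X ^ n - 1) : (p.map (Int.castRingHom ℂ)).mahlerMeasure = 1 := by
  obtain ⟨r, hr⟩ := h
  have hpr : p * r ≠ 0 := hr ▸ X_pow_sub_C_ne_zero hn 1
  have hM := congrArg (fun f : ℤ[X] => (f.map (Int.castRingHom ℂ)).mahlerMeasure) hr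
  simp only [Polynomial.map_sub, Polynomial.map_pow, map_X, Polynomial.map_one,
    mahlerMeasure_X_pow_sub_one hn, Polynomial.map_mul, mahlerMeasure_mul] at hM
  have hp := one_le_mahlerMeasure_of_ne_zero (left_ne_zero_of_mul hpr)
  have hr := one_le_mahlerMeasure_of_ne_zero (right_ne_zero_of_mul hpr)
  nlinarith

lemma exists_map_intMinpoly_eq_C_mul_minpoly (α : Qbar) :
    ∃ c : ℚ, c ≠ 0 ∧ (intMinpoly α).map (Int.castRingHom ℚ) = C c * minpoly ℚ α := by
  obtain ⟨b, hbM, hb⟩ := IsLocalization.integerNormalization_spec (nonZeroDivisors ℤ)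
    (minpoly ℚ α)
  set q := IsLocalization.integerNormalization (nonZeroDivisors ℤ) (minpoly ℚ α)
  have hb0 : b ≠ 0 := nonZeroDivisors.ne_zero hbM
  have hq : q ≠ 0 := by
    rintro hq
    rw [hq, Polynomial.map_zero, eq_comm, smul_eq_zero] at hb
    exact hb.elim hb0 (minpoly.ne_zero (Algebra.IsIntegral.isIntegral α))
  have hcont : (q.content : ℚ) ≠ 0 := by exact_mod_cast (content_eq_zero_iff.not.mpr hq)
  refine ⟨b / q.content, div_ne_zero (by exact_mod_cast hb0) hcont, ?_⟩
  apply mul_left_cancel₀ (C_ne_zero.mpr hcont)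
  calc C (q.content : ℚ) * (intMinpoly α).map (Int.castRingHom ℚ)
      = q.map (Int.castRingHom ℚ) := by
        conv_rhs => rw [q.eq_C_content_mul_primPart, Polynomial.map_mul, map_C, eq_intCast]
        rfl
    _ = C (b : ℚ) * minpoly ℚ α := by rw [← smul_eq_C_mul]; exact hb
    _ = _ := by rw [← mul_assoc, ← C_mul, mul_div_cancel₀ _ hcont]

lemma intMinpoly_ne_zero (α : Qbar) : intMinpoly α ≠ 0 := by
  obtain ⟨c, hc, h⟩ := exists_map_intMinpoly_eq_C_mul_minpoly α
  rintro h0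
  rw [h0, Polynomial.map_zero] at h
  exact mul_ne_zero (C_ne_zero.mpr hc) (minpoly.ne_zero (Algebra.IsIntegral.isIntegral α)) h.symm

lemma aeval_intMinpoly_self (α : Qbar) : aeval α (intMinpoly α) = 0 := by
  obtain ⟨c, -, h⟩ := exists_map_intMinpoly_eq_C_mul_minpoly α
  rw [← aeval_map_algebraMap ℚ, algebraMap_int_eq, h, map_mul, minpoly.aeval, mul_zero]

lemma intMinpoly_dvd_X_pow_sub_one {ζ : Qbar} {n : ℕ} (h : ζ ^ n = 1) :
    intMinpoly ζ ∣ X ^ n - 1 := by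
  obtain ⟨c, hc, hmap⟩ := exists_map_intMinpoly_eq_C_mul_minpoly ζ
  have hprim : (intMinpoly ζ).IsPrimitive := isPrimitive_primPart _
  rw [IsPrimitive.Int.dvd_iff_map_cast_dvd_map_cast _ _ hprim, hmap, C_mul_dvd hc]
  simpa using minpoly.dvd ℚ ζ (p := X ^ n - 1) (by simp [h])

lemma weilHeight_eq_logMahlerMeasure (α : Qbar) :
    weilHeight α = ((minpoly ℚ α).natDegree : ℝ)⁻¹ *
      ((intMinpoly α).map (Int.castRingHom ℂ)).logMahlerMeasure := by
  rw [weilHeight, logMahlerMeasure_eq_log_leadingCoeff_add_sum_log_roots,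
    leadingCoeff_map_of_injective (Int.castRingHom ℂ).injective_int, eq_intCast,
    Complex.norm_intCast]
  congr 3
  exact Multiset.map_congr rfl fun z _ => (Real.posLog_eq_log_max_one (norm_nonneg z)).symm

lemma one_le_mahlerMeasure_intMinpoly (α : Qbar) :
    1 ≤ ((intMinpoly α).map (Int.castRingHom ℂ)).mahlerMeasure :=
  one_le_mahlerMeasure_of_ne_zero (intMinpoly_ne_zero α)

lemma weilHeight_nonneg (α : Qbar) : 0 ≤ weilHeight α := by
  rw [weilHeight_eq_logMahlerMeasure, logMahlerMeasure_eq_log_MahlerMeasure]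
  exact mul_nonneg (by positivity) (Real.log_nonneg (one_le_mahlerMeasure_intMinpoly α))

lemma weilHeight_eq_zero_iff_mahlerMeasure_eq_one (α : Qbar) :
    weilHeight α = 0 ↔ ((intMinpoly α).map (Int.castRingHom ℂ)).mahlerMeasure = 1 := by
  have hdeg : ((minpoly ℚ α).natDegree : ℝ)⁻¹ ≠ 0 := by
    have := minpoly.natDegree_pos (Algebra.IsIntegral.isIntegral (R := ℚ) α)
    positivity
  have hM := one_le_mahlerMeasure_intMinpoly α
  rw [weilHeight_eq_logMahlerMeasure, logMahlerMeasure_eq_log_MahlerMeasure, mul_eq_zero,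
    or_iff_right hdeg, Real.log_eq_zero]
  constructor
  · rintro (h | h | h) <;> first | exact h | linarith
  · exact fun h => Or.inr (Or.inl h)

lemma isOfFinOrder_of_mahlerMeasure_intMinpoly_eq_one {γ : Qbar} (hγ : γ ≠ 0)
    (h : ((intMinpoly γ).map (Int.castRingHom ℂ)).mahlerMeasure = 1) : IsOfFinOrder γ := by
  -- `pow_eq_one_of_mahlerMeasure_eq_one` is about complex roots, so embed `Qbar` into `ℂ`.
  let ι : Qbar →ₐ[ℤ] ℂ := (IsAlgClosed.lift : Qbar →ₐ[ℚ] ℂ).restrictScalars ℤ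
  have hroot : ι γ ∈ (intMinpoly γ).aroots ℂ := mem_aroots.mpr
    ⟨intMinpoly_ne_zero γ, by rw [aeval_algHom_apply, aeval_intMinpoly_self, map_zero]⟩
  obtain ⟨n, hn, hpow⟩ := pow_eq_one_of_mahlerMeasure_eq_one h
    ((map_ne_zero_iff _ ι.toRingHom.injective).mpr hγ) hroot
  exact isOfFinOrder_iff_pow_eq_one.mpr ⟨n, hn, ι.toRingHom.injective (by simpa using hpow)⟩

lemma weilHeight_eq_zero_iff {γ : Qbar} (hγ : γ ≠ 0) : weilHeight γ = 0 ↔ IsOfFinOrder γ := by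
  rw [weilHeight_eq_zero_iff_mahlerMeasure_eq_one]
  refine ⟨isOfFinOrder_of_mahlerMeasure_intMinpoly_eq_one hγ, fun h => ?_⟩
  obtain ⟨n, hn, hpow⟩ := isOfFinOrder_iff_pow_eq_one.mp h
  exact mahlerMeasure_map_eq_one_of_dvd_X_pow_sub_one hn (intMinpoly_dvd_X_pow_sub_one hpow)

-- With this instance, `IsGalois K Qbar` is found by instance search.
instance (K : Subfield Qbar) : IsAlgClosure K Qbar :=
  ⟨inferInstance, Algebra.IsAlgebraic.tower_top (K := ℚ) K⟩

section Conjugates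

variable {K : Subfield Qbar}

def fixes.toAlgEquiv {σ : Qbar ≃+* Qbar} (hσ : fixes K σ) : Qbar ≃ₐ[K] Qbar :=
  AlgEquiv.ofRingEquiv (f := σ) fun k => hσ k k.2

lemma AlgEquiv.fixes (f : Qbar ≃ₐ[K] Qbar) : fixes K f.toRingEquiv :=
  fun x hx => f.commutes ⟨x, hx⟩

lemma fixes.apply_mem_rootSet {σ : Qbar ≃+* Qbar} (hσ : fixes K σ) (α : Qbar) :
    σ α ∈ (minpoly K α).rootSet Qbar := by
  rw [mem_rootSet]
  refine ⟨minpoly.ne_zero (Algebra.IsIntegral.isIntegral α), ?_⟩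
  rw [show σ α = hσ.toAlgEquiv α from rfl, aeval_algHom_apply, minpoly.aeval, map_zero]

lemma finite_setOf_fixes {β : Type*} (f : Qbar → β) (α : Qbar) :
    {r | ∃ σ : Qbar ≃+* Qbar, fixes K σ ∧ r = f (σ α)}.Finite :=
  (((minpoly K α).rootSet_finite Qbar).image f).subset <| by
    rintro _ ⟨σ, hσ, rfl⟩
    exact ⟨σ α, hσ.apply_mem_rootSet α, rfl⟩

lemma mem_of_forall_fixes {x : Qbar} (h : ∀ σ : Qbar ≃+* Qbar, fixes K σ → σ x = x) :
    x ∈ K := by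
  obtain ⟨y, rfl⟩ := (InfiniteGalois.mem_range_algebraMap_iff_fixed x).mpr
    fun f => h f.toRingEquiv f.fixes
  exact y.2

lemma mem_Kdiv_iff_exists_pow_mem {α : Qbar} (hα : α ≠ 0) :
    α ∈ Kdiv K ↔ ∃ n : ℕ, 0 < n ∧ α ^ n ∈ K := by
  refine ⟨fun ⟨_, m, hm, hmem⟩ => ⟨m.natAbs, Int.natAbs_pos.mpr hm, ?_⟩,
    fun ⟨n, hn, hmem⟩ => ⟨hα, n, by exact_mod_cast hn.ne', by rwa [zpow_natCast]⟩⟩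
  rcases Int.natAbs_eq m with h | h <;> rw [h] at hmem
  · rwa [zpow_natCast] at hmem
  · simpa only [zpow_neg, zpow_natCast, inv_inv] using K.inv_mem hmem

lemma exists_pow_mem_iff_forall_isOfFinOrder {α : Qbar} (hα : α ≠ 0) :
    (∃ n : ℕ, 0 < n ∧ α ^ n ∈ K) ↔ ∀ σ : Qbar ≃+* Qbar, fixes K σ → IsOfFinOrder (σ α / α) := by
  refine ⟨fun ⟨n, hn, hmem⟩ σ hσ => isOfFinOrder_iff_pow_eq_one.mpr
    ⟨n, hn, by rw [div_pow, ← map_pow, hσ _ hmem, div_self (pow_ne_zero n hα)]⟩, fun h => ?_⟩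
  obtain ⟨n, hn, hpow⟩ := (finite_setOf_fixes (K := K) (· / α) α).exists_pos_forall_pow_eq_one
    (by rintro _ ⟨σ, hσ, rfl⟩; exact h σ hσ)
  refine ⟨n, hn, mem_of_forall_fixes fun σ hσ => ?_⟩
  have := hpow _ ⟨σ, hσ, rfl⟩
  rwa [div_pow, div_eq_one_iff_eq (pow_ne_zero n hα), ← map_pow] at this

lemma WK_eq_zero_iff (α : Qbar) :
    WK K α = 0 ↔ ∀ σ : Qbar ≃+* Qbar, fixes K σ → weilHeight (σ α / α) = 0 := by
  rw [WK]
  refine (csSup_eq_zero_iff_of_nonneg ?_ ?_ ?_).trans ?_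
  · exact ⟨_, RingEquiv.refl Qbar, fun _ _ => rfl, rfl⟩
  · exact (finite_setOf_fixes (fun β => weilHeight (β / α)) α).bddAbove
  · rintro _ ⟨σ, -, rfl⟩
    exact weilHeight_nonneg _
  · exact ⟨fun h σ hσ => h _ ⟨σ, hσ, rfl⟩, by rintro h _ ⟨σ, hσ, rfl⟩; exact h σ hσ⟩

end Conjugates

theorem stmt1 (K : Subfield Qbar) (α : Qbar) (hα : α ≠ 0) :
    (WK K α = 0 ↔ α ∈ Kdiv K) ∧
    (α ∈ Kdiv K ↔ ∀ σ : Qbar ≃+* Qbar, fixes K σ →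
      ∃ ζ : Qbar, (∃ n : ℕ, 0 < n ∧ ζ ^ n = 1) ∧ σ α = ζ * α) := by
  have hKdiv : α ∈ Kdiv K ↔ ∀ σ : Qbar ≃+* Qbar, fixes K σ → IsOfFinOrder (σ α / α) :=
    (mem_Kdiv_iff_exists_pow_mem hα).trans (exists_pow_mem_iff_forall_isOfFinOrder hα)
  refine ⟨?_, hKdiv.trans (forall₂_congr fun σ _ => ?_)⟩
  · rw [WK_eq_zero_iff, hKdiv]
    exact forall₂_congr fun σ _ =>
      weilHeight_eq_zero_iff (div_ne_zero ((map_ne_zero σ).mpr hα) hα)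
  · rw [isOfFinOrder_iff_pow_eq_one]
    refine ⟨fun h => ⟨_, h, (div_mul_cancel₀ _ hα).symm⟩, ?_⟩
    rintro ⟨ζ, hζ, hσα⟩
    rwa [hσα, mul_div_cancel_right₀ _ hα]

end
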